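/- Local differentiability of the Bradley–Terry projection in the winning probabilities (key first-order expansion in the proof of Theorem 1): Let K ≥ 2 and let ρ be a weight system on {1,…,K} whose comparison graph is connected. For ϑ ∈ ℝ^{K−1} (indexed by 2,…,K) write θ(ϑ) ∈ ℝ^K for the vector with first coordinate 0 and remaining coordinates ϑ; for q ∈ (0,1)^{{(k,l): 1≤k<l≤K}} extend q by q_{lk} := 1 − q_{kl}. Define F : ℝ^{K−1} × (0,1)^{K(K−1)/2} → ℝ^{K−1} by F_k(ϑ, q) = Σ_{l≠k} ρ_{kl}(σ(θ(ϑ)_k − θ(ϑ)_l) − q_{kl}) for k = 2,…,K. If F(ϑ₀, q₀) = 0, then the partial Jacobian ∂F/∂ϑ at (ϑ₀, q₀) is invertible, and there exist an open neighborhood V of q₀ and a continuously differentiable map q ↦ ϑ(q) on V such that ϑ(q₀) = ϑ₀, F(ϑ(q), q) = 0 for all q ∈ V, and the derivative of q ↦ ϑ(q) at q₀ equals −(∂F/∂ϑ(ϑ₀,q₀))^{−1} ∂F/∂q(ϑ₀,q₀). -/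

import Mathlib

/-!
`F` is smooth, so everything follows from the implicit function theorem once `∂F/∂ϑ` is
invertible. In a direction `v`, `∂F/∂ϑ` is the weighted graph Laplacian `L_W θ(v)`, with weights
`W_kl = ρ_kl σ'(θ_k − θ_l)`, read off at the rows `k = 2, …, K`. Since `θ(v)_1 = 0`, a kernel
vector makes `∑_k θ(v)_k (L_W θ(v))_k = ½ ∑_{k,l} W_kl (θ(v)_k − θ(v)_l)²` vanish. As `σ' > 0`,
`W_kl > 0` along every edge of the connected comparison graph, so `θ(v)` is constant, hence zero.
-/

open scoped BigOperators

/-- The logistic sigmoid function `σ(t) = 1/(1+exp(−t))`. -/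
noncomputable def sigmoid (t : ℝ) : ℝ := 1 / (1 + Real.exp (-t))

/-- The index set `{(k,l) : 1 ≤ k < l ≤ K}` of unordered pairs. -/
abbrev Pairs (K : ℕ) := { p : Fin K × Fin K // p.1 < p.2 }

/-- Extension of a family `q` indexed by pairs `k < l` to all ordered pairs
with `k ≠ l`, via `q_{lk} = 1 − q_{kl}`. -/
noncomputable def qExtend (K : ℕ) (q : Pairs K → ℝ) (k l : Fin K) : ℝ :=
  if h : k < l then q ⟨(k, l), h⟩
  else if h' : l < k then 1 - q ⟨(l, k), h'⟩ else 0

/-- Extension of `ϑ ∈ ℝ^{K−1}` (indexed by `{2,…,K}`) to `θ(ϑ) ∈ ℝ^K` with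
first coordinate `0`. -/
def thetaExtend (K : ℕ) (ϑ : Fin (K - 1) → ℝ) (k : Fin K) : ℝ :=
  if h : k.1 = 0 then 0 else ϑ ⟨k.1 - 1, by have := k.isLt; omega⟩

/-- The map `F(ϑ, q)` whose components are the estimating equations
`F_k(ϑ, q) = ∑_{l ≠ k} ρ_{kl} (σ(θ(ϑ)_k − θ(ϑ)_l) − q_{kl})` for
`k = 2,…,K`. -/
noncomputable def Fmap (K : ℕ) (ρ : Fin K → Fin K → ℝ)
    (p : (Fin (K - 1) → ℝ) × (Pairs K → ℝ)) : Fin (K - 1) → ℝ :=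
  fun i =>
    ∑ l ∈ Finset.univ.filter
        (fun l => l ≠ (⟨i.1 + 1, by have := i.isLt; omega⟩ : Fin K)),
      ρ ⟨i.1 + 1, by have := i.isLt; omega⟩ l *
        (sigmoid (thetaExtend K p.1 ⟨i.1 + 1, by have := i.isLt; omega⟩ -
            thetaExtend K p.1 l) -
          qExtend K p.2 ⟨i.1 + 1, by have := i.isLt; omega⟩ l)

section ImplicitFunction

variable {𝕜 : Type*} [RCLike 𝕜]
  {E : Type*} [NormedAddCommGroup E] [NormedSpace 𝕜 E] [CompleteSpace E]
  {P : Type*} [NormedAddCommGroup P] [NormedSpace 𝕜 P] [CompleteSpace P]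
  {F : Type*} [NormedAddCommGroup F] [NormedSpace 𝕜 F] [CompleteSpace F]

theorem ContDiffAt.exists_isOpen_implicitFunction_fst {f : E × P → F} {x₀ : E} {p₀ : P}
    (hf : ContDiffAt 𝕜 1 f (x₀, p₀)) (A : E ≃L[𝕜] F)
    (hA : (A : E →L[𝕜] F) = fderiv 𝕜 (fun x => f (x, p₀)) x₀) :
    ∃ V : Set P, IsOpen V ∧ p₀ ∈ V ∧ ∃ φ : P → E, ContDiffOn 𝕜 1 φ V ∧ φ p₀ = x₀ ∧
      (∀ p ∈ V, f (φ p, p) = f (x₀, p₀)) ∧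
      fderiv 𝕜 φ p₀ = -((A.symm : F →L[𝕜] E).comp (fderiv 𝕜 (fun p => f (x₀, p)) p₀)) := by
  -- `ContDiffAt.implicitFunction` solves for the second variable: apply it to `f ∘ Prod.swap`.
  set f' := fderiv 𝕜 f (x₀, p₀)
  have hf' : HasFDerivAt f f' (x₀, p₀) := (hf.differentiableAt one_ne_zero).hasFDerivAt
  have hg : ContDiffAt 𝕜 1 (f ∘ Prod.swap) (p₀, x₀) :=
    hf.comp (p₀, x₀) (ContinuousLinearEquiv.prodComm 𝕜 P E).contDiff.contDiffAt
  have hg' : fderiv 𝕜 (f ∘ Prod.swap) (p₀, x₀) =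
      f' ∘L (ContinuousLinearEquiv.prodComm 𝕜 P E : P × E →L[𝕜] E × P) :=
    (hf'.comp (p₀, x₀) (ContinuousLinearEquiv.prodComm 𝕜 P E).hasFDerivAt).fderiv
  have hfx : HasFDerivAt (fun x => f (x, p₀)) (f' ∘L .inl 𝕜 E P) x₀ :=
    hf'.comp x₀ (hasFDerivAt_prodMk_left x₀ p₀)
  have hfp : HasFDerivAt (fun p => f (x₀, p)) (f' ∘L .inr 𝕜 E P) p₀ :=
    hf'.comp p₀ (hasFDerivAt_prodMk_right x₀ p₀)
  have hx : fderiv 𝕜 (f ∘ Prod.swap) (p₀, x₀) ∘L .inr 𝕜 P E = A := by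
    rw [hA, hfx.fderiv, hg']
    rfl
  have hp : fderiv 𝕜 (f ∘ Prod.swap) (p₀, x₀) ∘L .inl 𝕜 P E =
      fderiv 𝕜 (fun p => f (x₀, p)) p₀ := by
    rw [hfp.fderiv, hg']
    rfl
  have hinv : (fderiv 𝕜 (f ∘ Prod.swap) (p₀, x₀) ∘L .inr 𝕜 P E).IsInvertible := hx ▸ ⟨A, rfl⟩
  set φ := hg.implicitFunction one_ne_zero hinv
  obtain ⟨s, hs, hφs⟩ :=
    (hg.contDiffAt_implicitFunction one_ne_zero hinv).contDiffOn le_rfl (by simp)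
  obtain ⟨V, hV, hVo, hp₀⟩ := eventually_nhds_iff.1
    ((Filter.eventually_mem_set.2 hs).and (hg.eventually_apply_implicitFunction one_ne_zero hinv))
  refine ⟨V, hVo, hp₀, φ, hφs.mono fun p hp => (hV p hp).1,
    hg.implicitFunction_apply_self one_ne_zero hinv, fun p hp => (hV p hp).2, ?_⟩
  rw [(hg.hasStrictFDerivAt_implicitFunction one_ne_zero hinv).hasFDerivAt.fderiv, hx, hp,
    ContinuousLinearMap.inverse_equiv]

end ImplicitFunction

theorem SimpleGraph.Reachable.eq_of_forall_adj {V α : Type*} {G : SimpleGraph V} {f : V → α}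
    (hf : ∀ a b, G.Adj a b → f a = f b) {a b : V} (h : G.Reachable a b) : f a = f b := by
  obtain ⟨w⟩ := h
  induction w with
  | nil => rfl
  | cons hadj _ ih => exact (hf _ _ hadj).trans ih

section WeightedLaplacian

variable {V : Type*} [Fintype V] {W : V → V → ℝ} {u : V → ℝ}

def weightedLaplacian (W : V → V → ℝ) (u : V → ℝ) (k : V) : ℝ :=
  ∑ l, W k l * (u k - u l)

theorem two_mul_sum_mul_weightedLaplacian (hW : ∀ k l, k ≠ l → W k l = W l k) :
    2 * ∑ k, u k * weightedLaplacian W u k = ∑ k, ∑ l, W k l * (u k - u l) ^ 2 := by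
  have hW' : ∀ k l, W l k * (u l - u k) = W k l * (u l - u k) := fun k l => by
    rcases eq_or_ne k l with rfl | hkl
    · rfl
    · rw [hW k l hkl]
  have hswap : ∑ k, u k * weightedLaplacian W u k = ∑ k, ∑ l, -(W k l * (u k - u l) * u l) := by
    simp only [weightedLaplacian, Finset.mul_sum]
    rw [Finset.sum_comm]
    exact Finset.sum_congr rfl fun k _ => Finset.sum_congr rfl fun l _ => by rw [hW']; ring
  rw [two_mul]
  nth_rewrite 2 [hswap]
  simp only [weightedLaplacian, Finset.mul_sum, ← Finset.sum_add_distrib]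
  exact Finset.sum_congr rfl fun k _ => Finset.sum_congr rfl fun l _ => by ring

theorem eq_zero_of_weightedLaplacian_eq_zero {G : SimpleGraph V} (hG : G.Connected)
    (hW_nonneg : ∀ k l, k ≠ l → 0 ≤ W k l) (hW_symm : ∀ k l, k ≠ l → W k l = W l k)
    (hW_pos : ∀ k l, G.Adj k l → 0 < W k l) {r : V} (hr : u r = 0)
    (hu : ∀ k, k ≠ r → weightedLaplacian W u k = 0) : u = 0 := by
  have hterm_nonneg : ∀ k l, 0 ≤ W k l * (u k - u l) ^ 2 := fun k l => by
    rcases eq_or_ne k l with rfl | hkl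
    · simp
    · exact mul_nonneg (hW_nonneg k l hkl) (sq_nonneg _)
  have henergy : ∑ k, ∑ l, W k l * (u k - u l) ^ 2 = 0 := by
    rw [← two_mul_sum_mul_weightedLaplacian hW_symm, Finset.sum_eq_zero, mul_zero]
    intro k _
    rcases eq_or_ne k r with rfl | hkr
    · rw [hr, zero_mul]
    · rw [hu k hkr, mul_zero]
  have hterm : ∀ k l, W k l * (u k - u l) ^ 2 = 0 := fun k l =>
    (Finset.sum_eq_zero_iff_of_nonneg fun l _ => hterm_nonneg k l).1
      ((Finset.sum_eq_zero_iff_of_nonneg fun k _ =>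
        Finset.sum_nonneg fun l _ => hterm_nonneg k l).1 henergy k (Finset.mem_univ k))
      l (Finset.mem_univ l)
  have hadj : ∀ k l, G.Adj k l → u k = u l := fun k l hkl => by
    have := hterm k l
    rwa [mul_eq_zero, or_iff_right (hW_pos k l hkl).ne', sq_eq_zero_iff, sub_eq_zero] at this
  funext k
  rw [(hG k r).eq_of_forall_adj hadj, hr, Pi.zero_apply]

end WeightedLaplacian

theorem sigmoid_eq_real_sigmoid : sigmoid = Real.sigmoid := by
  funext t
  rw [sigmoid, Real.sigmoid_def, one_div]

theorem Real.sigmoid_mul_one_sub_sigmoid_pos (t : ℝ) :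
    0 < Real.sigmoid t * (1 - Real.sigmoid t) :=
  mul_pos (Real.sigmoid_pos t) (sub_pos.2 (Real.sigmoid_lt_one t))

theorem Real.sigmoid_mul_one_sub_sigmoid_neg (t : ℝ) :
    Real.sigmoid (-t) * (1 - Real.sigmoid (-t)) = Real.sigmoid t * (1 - Real.sigmoid t) := by
  rw [Real.sigmoid_neg]
  ring

section BradleyTerry

variable {K : ℕ} (ρ : Fin K → Fin K → ℝ)

def succIdx (i : Fin (K - 1)) : Fin K := ⟨i.1 + 1, by omega⟩

theorem exists_succIdx_eq {k : Fin K} (hk : k.1 ≠ 0) : ∃ i : Fin (K - 1), succIdx i = k :=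
  ⟨⟨k.1 - 1, by omega⟩, Fin.ext (by simp only [succIdx]; omega)⟩

theorem thetaExtend_succIdx (v : Fin (K - 1) → ℝ) (i : Fin (K - 1)) :
    thetaExtend K v (succIdx i) = v i := by
  simp [thetaExtend, succIdx]

theorem thetaExtend_of_val_eq_zero (v : Fin (K - 1) → ℝ) {k : Fin K} (hk : k.1 = 0) :
    thetaExtend K v k = 0 := by
  simp [thetaExtend, hk]

theorem thetaExtend_add_smul (ϑ v : Fin (K - 1) → ℝ) (t : ℝ) (k : Fin K) :
    thetaExtend K (ϑ + t • v) k = thetaExtend K ϑ k + t * thetaExtend K v k := by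
  unfold thetaExtend
  split_ifs <;> simp

theorem contDiff_thetaExtend {n : WithTop ℕ∞} (k : Fin K) :
    ContDiff ℝ n fun ϑ : Fin (K - 1) → ℝ => thetaExtend K ϑ k := by
  unfold thetaExtend
  split_ifs <;> fun_prop

theorem contDiff_qExtend {n : WithTop ℕ∞} (k l : Fin K) :
    ContDiff ℝ n fun q : Pairs K → ℝ => qExtend K q k l := by
  unfold qExtend
  split_ifs <;> fun_prop

theorem Fmap_apply (p : (Fin (K - 1) → ℝ) × (Pairs K → ℝ)) (i : Fin (K - 1)) :
    Fmap K ρ p i = ∑ l ∈ Finset.univ.filter (· ≠ succIdx i), ρ (succIdx i) l *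
      (sigmoid (thetaExtend K p.1 (succIdx i) - thetaExtend K p.1 l) -
        qExtend K p.2 (succIdx i) l) :=
  rfl

theorem contDiff_Fmap {n : WithTop ℕ∞} : ContDiff ℝ n (Fmap K ρ) := by
  refine contDiff_pi.2 fun i => ?_
  simp only [Fmap_apply, sigmoid_eq_real_sigmoid]
  refine ContDiff.sum fun l _ => contDiff_const.mul (ContDiff.sub ?_ ?_)
  · exact (contDiff_sigmoid.of_le le_top).comp <|
      ((contDiff_thetaExtend _).comp contDiff_fst).sub ((contDiff_thetaExtend _).comp contDiff_fst)
  · exact (contDiff_qExtend _ _).comp contDiff_snd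

noncomputable def fisherWeight (θ : Fin K → ℝ) (k l : Fin K) : ℝ :=
  ρ k l * (Real.sigmoid (θ k - θ l) * (1 - Real.sigmoid (θ k - θ l)))

theorem hasLineDerivAt_Fmap_fst (q : Pairs K → ℝ) (ϑ₀ v : Fin (K - 1) → ℝ) :
    HasLineDerivAt ℝ (fun ϑ => Fmap K ρ (ϑ, q))
      (fun i => ∑ l ∈ Finset.univ.filter (· ≠ succIdx i),
        fisherWeight ρ (thetaExtend K ϑ₀) (succIdx i) l *
          (thetaExtend K v (succIdx i) - thetaExtend K v l)) ϑ₀ v := by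
  refine hasDerivAt_pi.2 fun i => ?_
  simp only [Fmap_apply]
  refine HasDerivAt.fun_sum fun l _ => ?_
  set a := thetaExtend K ϑ₀ (succIdx i) - thetaExtend K ϑ₀ l
  set b := thetaExtend K v (succIdx i) - thetaExtend K v l
  have harg : ∀ t : ℝ, thetaExtend K (ϑ₀ + t • v) (succIdx i) - thetaExtend K (ϑ₀ + t • v) l =
      a + t * b := fun t => by
    simp only [thetaExtend_add_smul, a, b]
    ring
  have hline : HasDerivAt (fun t : ℝ => a + t * b) b 0 := by
    simpa using ((hasDerivAt_id (0 : ℝ)).mul_const b).const_add a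
  have hσ := (Real.hasDerivAt_sigmoid (a + 0 * b)).comp (0 : ℝ) hline
  rw [zero_mul, add_zero] at hσ
  simp only [harg, sigmoid_eq_real_sigmoid]
  exact ((hσ.sub_const _).const_mul _).congr_deriv (by unfold fisherWeight; ring)

theorem fisherWeight_nonneg (θ : Fin K → ℝ) {k l : Fin K} (hρ : 0 ≤ ρ k l) :
    0 ≤ fisherWeight ρ θ k l :=
  mul_nonneg hρ (Real.sigmoid_mul_one_sub_sigmoid_pos _).le

theorem fisherWeight_pos (θ : Fin K → ℝ) {k l : Fin K} (hρ : 0 < ρ k l) :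
    0 < fisherWeight ρ θ k l :=
  mul_pos hρ (Real.sigmoid_mul_one_sub_sigmoid_pos _)

theorem fisherWeight_comm (θ : Fin K → ℝ) {k l : Fin K} (hρ : ρ k l = ρ l k) :
    fisherWeight ρ θ k l = fisherWeight ρ θ l k := by
  rw [fisherWeight, fisherWeight, hρ, ← neg_sub, Real.sigmoid_mul_one_sub_sigmoid_neg]

theorem fderiv_Fmap_fst_apply (q : Pairs K → ℝ) (ϑ₀ v : Fin (K - 1) → ℝ) (i : Fin (K - 1)) :
    fderiv ℝ (fun ϑ => Fmap K ρ (ϑ, q)) ϑ₀ v i =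
      weightedLaplacian (fisherWeight ρ (thetaExtend K ϑ₀)) (thetaExtend K v) (succIdx i) := by
  have hdiff : DifferentiableAt ℝ (fun ϑ => Fmap K ρ (ϑ, q)) ϑ₀ :=
    ((contDiff_Fmap ρ).comp (contDiff_id.prodMk contDiff_const)).differentiable one_ne_zero ϑ₀
  rw [← hdiff.lineDeriv_eq_fderiv, (hasLineDerivAt_Fmap_fst ρ q ϑ₀ v).lineDeriv]
  refine Finset.sum_filter_of_ne fun l _ hl => ?_
  rintro rfl
  simp at hl

theorem injective_fderiv_Fmap_fst (hρnn : ∀ k l : Fin K, k ≠ l → 0 ≤ ρ k l)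
    (hρsym : ∀ k l : Fin K, k ≠ l → ρ k l = ρ l k)
    (hconn : (SimpleGraph.fromRel (fun k l : Fin K => 0 < ρ k l)).Connected)
    (q : Pairs K → ℝ) (ϑ₀ : Fin (K - 1) → ℝ) :
    Function.Injective (fderiv ℝ (fun ϑ => Fmap K ρ (ϑ, q)) ϑ₀) := by
  refine (injective_iff_map_eq_zero _).2 fun v hv => funext fun i => ?_
  have hpos : ∀ k l, (SimpleGraph.fromRel fun k l : Fin K => 0 < ρ k l).Adj k l →
      0 < fisherWeight ρ (thetaExtend K ϑ₀) k l := by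
    rintro k l ⟨hkl, hρ | hρ⟩
    · exact fisherWeight_pos _ _ hρ
    · exact fisherWeight_pos _ _ (hρ.trans_eq (hρsym k l hkl).symm)
  have hu : thetaExtend K v = 0 :=
    eq_zero_of_weightedLaplacian_eq_zero hconn
      (fun k l hkl => fisherWeight_nonneg _ _ (hρnn k l hkl))
      (fun k l hkl => fisherWeight_comm _ _ (hρsym k l hkl)) hpos
      (r := ⟨0, by have := i.isLt; omega⟩) (thetaExtend_of_val_eq_zero v rfl) fun k hk => by
        obtain ⟨j, rfl⟩ := exists_succIdx_eq fun h => hk (Fin.ext h)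
        rw [← fderiv_Fmap_fst_apply, hv, Pi.zero_apply]
  rw [← thetaExtend_succIdx v i, hu, Pi.zero_apply, Pi.zero_apply]

end BradleyTerry

theorem BT_projection_implicit_function_general
    (K : ℕ)
    (ρ : Fin K → Fin K → ℝ)
    (hρnn : ∀ k l : Fin K, k ≠ l → 0 ≤ ρ k l)
    (hρsym : ∀ k l : Fin K, k ≠ l → ρ k l = ρ l k)
    (hconn : (SimpleGraph.fromRel (fun k l : Fin K => 0 < ρ k l)).Connected)
    (ϑ₀ : Fin (K - 1) → ℝ) (q₀ : Pairs K → ℝ)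
    (hF0 : Fmap K ρ (ϑ₀, q₀) = 0) :
    ∃ A : (Fin (K - 1) → ℝ) ≃L[ℝ] (Fin (K - 1) → ℝ),
      (A : (Fin (K - 1) → ℝ) →L[ℝ] (Fin (K - 1) → ℝ)) =
        fderiv ℝ (fun ϑ : Fin (K - 1) → ℝ => Fmap K ρ (ϑ, q₀)) ϑ₀ ∧
      ∃ V : Set (Pairs K → ℝ), IsOpen V ∧ q₀ ∈ V ∧
        ∃ φ : (Pairs K → ℝ) → (Fin (K - 1) → ℝ),
          ContDiffOn ℝ 1 φ V ∧
          φ q₀ = ϑ₀ ∧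
          (∀ q ∈ V, Fmap K ρ (φ q, q) = 0) ∧
          fderiv ℝ φ q₀ =
            -((A.symm : (Fin (K - 1) → ℝ) →L[ℝ] (Fin (K - 1) → ℝ)).comp
                (fderiv ℝ (fun q : Pairs K → ℝ => Fmap K ρ (ϑ₀, q)) q₀)) := by
  let A := (LinearEquiv.ofInjectiveEndo _
    (injective_fderiv_Fmap_fst ρ hρnn hρsym hconn q₀ ϑ₀)).toContinuousLinearEquiv
  refine ⟨A, rfl, ?_⟩
  simpa only [hF0] using (contDiff_Fmap ρ).contDiffAt.exists_isOpen_implicitFunction_fst A rfl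

/-- Local differentiability of the Bradley–Terry projection in the winning
probabilities: at a zero `(ϑ₀, q₀)` of `F`, the partial Jacobian `∂F/∂ϑ` is
invertible and there is a local continuously differentiable implicit solution
map `q ↦ ϑ(q)` with derivative `−(∂F/∂ϑ)⁻¹ ∂F/∂q` at `q₀`. -/
theorem BT_projection_implicit_function
    (K : ℕ) (hK : 2 ≤ K)
    (ρ : Fin K → Fin K → ℝ)
    (hρnn : ∀ k l : Fin K, k ≠ l → 0 ≤ ρ k l)
    (hρsym : ∀ k l : Fin K, k ≠ l → ρ k l = ρ l k)
    (hconn : (SimpleGraph.fromRel (fun k l : Fin K => 0 < ρ k l)).Connected)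
    (ϑ₀ : Fin (K - 1) → ℝ) (q₀ : Pairs K → ℝ)
    (hq₀ : ∀ p : Pairs K, q₀ p ∈ Set.Ioo (0 : ℝ) 1)
    (hF0 : Fmap K ρ (ϑ₀, q₀) = 0) :
    ∃ A : (Fin (K - 1) → ℝ) ≃L[ℝ] (Fin (K - 1) → ℝ),
      (A : (Fin (K - 1) → ℝ) →L[ℝ] (Fin (K - 1) → ℝ)) =
        fderiv ℝ (fun ϑ : Fin (K - 1) → ℝ => Fmap K ρ (ϑ, q₀)) ϑ₀ ∧
      ∃ V : Set (Pairs K → ℝ), IsOpen V ∧ q₀ ∈ V ∧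
        ∃ φ : (Pairs K → ℝ) → (Fin (K - 1) → ℝ),
          ContDiffOn ℝ 1 φ V ∧
          φ q₀ = ϑ₀ ∧
          (∀ q ∈ V, Fmap K ρ (φ q, q) = 0) ∧
          fderiv ℝ φ q₀ =
            -((A.symm : (Fin (K - 1) → ℝ) →L[ℝ] (Fin (K - 1) → ℝ)).comp
                (fderiv ℝ (fun q : Pairs K → ℝ => Fmap K ρ (ϑ₀, q)) q₀)) :=
  BT_projection_implicit_function_general K ρ hρnn hρsym hconn ϑ₀ q₀ hF0
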